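/- Let G = (V,E) be a finite connected simple graph with |V| ≥ 3 that is biconnected (for every vertex v ∈ V, the induced subgraph on V \ {v} is connected) and uniform, meaning that the uniform pmf μ₀ on Γ_G, given by μ₀(γ) = 1/|Γ_G| for every γ ∈ Γ_G, is MEO-optimal. Then G is homogeneous: there exists a pmf μ on Γ_G whose edge usage probability η_μ is constant on E (equivalently, η_{μ₀} is constant on E). -/

import Mathlib

noncomputable section
open scoped Classical
open Finset

variable {V : Type*} [Fintype V] [DecidableEq V]

/-- A pmf on a finite family `Γ` of edge sets. -/
def IsPmf (Γ : Finset (Finset (Sym2 V))) (μ : Finset (Sym2 V) → ℝ) : Prop :=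
  (∀ γ, 0 ≤ μ γ) ∧ (∀ γ, γ ∉ Γ → μ γ = 0) ∧ ∑ γ ∈ Γ, μ γ = 1

/-- Edge usage probability. -/
def eta (Γ : Finset (Finset (Sym2 V))) (μ : Finset (Sym2 V) → ℝ) (e : Sym2 V) : ℝ :=
  ∑ γ ∈ Γ.filter (fun γ => e ∈ γ), μ γ

/-- Expected overlap. -/
def EO (Γ : Finset (Finset (Sym2 V))) (μ : Finset (Sym2 V) → ℝ) : ℝ :=
  ∑ γ ∈ Γ, ∑ γ' ∈ Γ, ((γ ∩ γ').card : ℝ) * μ γ * μ γ'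

/-- Minimum expected overlap. -/
def MEO (Γ : Finset (Finset (Sym2 V))) : ℝ :=
  sInf {x : ℝ | ∃ μ, IsPmf Γ μ ∧ x = EO Γ μ}

/-- The set of spanning trees of `G`, as finsets of edges. -/
def spanningTrees (G : SimpleGraph V) : Finset (Finset (Sym2 V)) :=
  Finset.univ.filter (fun γ => ↑γ ⊆ G.edgeSet ∧
    (SimpleGraph.fromEdgeSet (↑γ : Set (Sym2 V))).Connected ∧
    γ.card = Fintype.card V - 1)

/-- Edges of `G` with both endpoints in `W`. -/
def edgesWithin (G : SimpleGraph V) (W : Finset V) : Finset (Sym2 V) :=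
  G.edgeFinset.filter (fun e => ∀ v ∈ e, v ∈ W)

/-- `γ` is a spanning tree of the subgraph of `G` induced by the vertex set `W`. -/
def IsSpanningTreeOn (G : SimpleGraph V) (W : Finset V) (γ : Finset (Sym2 V)) : Prop :=
  γ ⊆ edgesWithin G W ∧
    ((SimpleGraph.fromEdgeSet (↑γ : Set (Sym2 V))).induce (↑W : Set V)).Connected ∧
    γ.card = W.card - 1

def spanningTreesOn (G : SimpleGraph V) (W : Finset V) : Finset (Finset (Sym2 V)) :=
  Finset.univ.filter (IsSpanningTreeOn G W)

def Adm (Γ : Finset (Finset (Sym2 V))) (ρ : Sym2 V → ℝ) : Prop :=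
  (∀ e, 0 ≤ ρ e) ∧ ∀ γ ∈ Γ, 1 ≤ ∑ e ∈ γ, ρ e

def Mod2 (Eset : Finset (Sym2 V)) (Γ : Finset (Finset (Sym2 V))) : ℝ :=
  sInf {x : ℝ | ∃ ρ, Adm Γ ρ ∧ x = ∑ e ∈ Eset, (ρ e) ^ 2}

/-- A fair spanning tree. -/
def IsFair (G : SimpleGraph V) (γ : Finset (Sym2 V)) : Prop :=
  ∃ μ, IsPmf (spanningTrees G) μ ∧ EO (spanningTrees G) μ = MEO (spanningTrees G) ∧ 0 < μ γ

def IsFeasiblePartition (G : SimpleGraph V) (P : Finset (Finset V)) : Prop :=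
  2 ≤ P.card ∧ (∀ p ∈ P, p.Nonempty) ∧ (∀ v : V, ∃! p, p ∈ P ∧ v ∈ p) ∧
    ∀ p ∈ P, (G.induce (↑p : Set V)).Connected

/-- The edges of `G` joining distinct parts of the partition `P`. -/
def cutEdges (G : SimpleGraph V) (P : Finset (Finset V)) : Finset (Sym2 V) :=
  G.edgeFinset.filter (fun e => ¬ ∃ p ∈ P, ∀ v ∈ e, v ∈ p)

/-- `G` is homogeneous. -/
def IsHomogeneous (G : SimpleGraph V) : Prop :=
  ∃ μ, IsPmf (spanningTrees G) μ ∧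
    ∃ c : ℝ, ∀ e ∈ G.edgeFinset, eta (spanningTrees G) μ e = c

/-- The uniform pmf on the spanning trees of `G`. -/
def uniformPmf {V : Type*} [Fintype V] [DecidableEq V] (G : SimpleGraph V) :
    Finset (Sym2 V) → ℝ :=
  fun γ => if γ ∈ spanningTrees G then ((spanningTrees G).card : ℝ)⁻¹ else 0

/-!
The expected overlap equals `∑ e, η(e)²`. Moving mass `t` from a spanning tree `γ₀` to a spanning
tree `γ₁` changes it at first order by `2t (∑_{e ∈ γ₁} η(e) - ∑_{e ∈ γ₀} η(e))`; since the uniform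
pmf is optimal and charges every spanning tree, all spanning trees have the same `η`-weight.
Exchanging an edge `f` of a spanning tree `T` for an edge `xy` whose fundamental cycle contains `f`
then gives `η(xy) = η(f)`. Biconnectivity lets these equalities reach every edge: for a vertex `v`,
the weight of the edge by which `T` leaves `v` towards `u` is constant as `u` moves along the
connected graph `G - v`, so all edges of `T` at `v` have the same weight; as `T` is connected, all
its edges do, and every edge of `G` shares the weight of an edge of `T` on its fundamental cycle.
-/

section ExpectedOverlap

variable {V : Type*} [DecidableEq V] (Γ : Finset (Finset (Sym2 V)))

lemma eta_add_smul (μ δ : Finset (Sym2 V) → ℝ) (t : ℝ) (e : Sym2 V) :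
    eta Γ (μ + t • δ) e = eta Γ μ e + t * eta Γ δ e := by
  simp only [eta, Pi.add_apply, Pi.smul_apply, smul_eq_mul, sum_add_distrib, mul_sum]

lemma sum_eta_eq (μ : Finset (Sym2 V) → ℝ) (γ : Finset (Sym2 V)) :
    ∑ e ∈ γ, eta Γ μ e = ∑ γ' ∈ Γ, (#(γ ∩ γ') : ℝ) * μ γ' := by
  simp only [eta, sum_filter]
  rw [sum_comm]
  refine sum_congr rfl fun γ' _ => ?_
  rw [← sum_filter, filter_mem_eq_inter, sum_const, nsmul_eq_mul]

variable [Fintype V]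

lemma sum_eta_mul_eta (μ δ : Finset (Sym2 V) → ℝ) :
    ∑ e, eta Γ μ e * eta Γ δ e = ∑ γ ∈ Γ, δ γ * ∑ e ∈ γ, eta Γ μ e := by
  conv_lhs => enter [2, e, 2]; rw [eta, sum_filter]
  simp only [mul_sum]
  rw [sum_comm]
  refine sum_congr rfl fun γ _ => ?_
  simp only [mul_ite, mul_zero, ← sum_filter, filter_mem_eq_inter, univ_inter]
  exact sum_congr rfl fun e _ => mul_comm _ _

lemma EO_eq_sum_eta_sq (μ : Finset (Sym2 V) → ℝ) : EO Γ μ = ∑ e, eta Γ μ e ^ 2 := by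
  simp only [sq, sum_eta_mul_eta, sum_eta_eq, EO, mul_sum]
  exact sum_congr rfl fun γ _ => sum_congr rfl fun γ' _ => by ring

end ExpectedOverlap

lemma exists_sum_sq_add_mul_lt {ι : Type*} (s : Finset ι) (a d : ι → ℝ)
    (hneg : ∑ i ∈ s, a i * d i < 0) {T : ℝ} (hT : 0 < T) :
    ∃ t, 0 < t ∧ t ≤ T ∧ ∑ i ∈ s, (a i + t * d i) ^ 2 < ∑ i ∈ s, a i ^ 2 := by
  set B := ∑ i ∈ s, a i * d i
  set C := ∑ i ∈ s, d i ^ 2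
  have hC : 0 ≤ C := sum_nonneg fun i _ => sq_nonneg _
  have hexpand : ∀ t, ∑ i ∈ s, (a i + t * d i) ^ 2 = ∑ i ∈ s, a i ^ 2 + t * (2 * B + t * C) := by
    intro t
    simp only [B, C, mul_sum, ← sum_add_distrib]
    exact sum_congr rfl fun i _ => by ring
  set t := min T (-B / (C + 1))
  have ht : 0 < t := lt_min hT (div_pos (neg_pos.2 hneg) (by linarith))
  have htC : t * C < -B := by
    calc t * C ≤ -B / (C + 1) * C := mul_le_mul_of_nonneg_right (min_le_right _ _) hC
      _ < -B := by
        rw [div_mul_eq_mul_div, div_lt_iff₀ (by linarith)]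
        nlinarith
  refine ⟨t, ht, min_le_left _ _, ?_⟩
  rw [hexpand]
  nlinarith

section Optimality

variable {V : Type*} [DecidableEq V] {Γ : Finset (Finset (Sym2 V))}
  {μ : Finset (Sym2 V) → ℝ}

lemma EO_nonneg (hμ : ∀ γ, 0 ≤ μ γ) : 0 ≤ EO Γ μ :=
  sum_nonneg fun γ _ => sum_nonneg fun γ' _ =>
    mul_nonneg (mul_nonneg (Nat.cast_nonneg _) (hμ γ)) (hμ γ')

lemma MEO_le_EO (hμ : IsPmf Γ μ) : MEO Γ ≤ EO Γ μ :=
  csInf_le ⟨0, by rintro _ ⟨ν, hν, rfl⟩; exact EO_nonneg hν.1⟩ ⟨μ, hμ, rfl⟩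

lemma IsPmf.add_smul_single_sub_single (hμ : IsPmf Γ μ) {γ₀ γ₁ : Finset (Sym2 V)}
    (h₀ : γ₀ ∈ Γ) (h₁ : γ₁ ∈ Γ) {t : ℝ} (ht : 0 ≤ t) (htμ : t ≤ μ γ₀) :
    IsPmf Γ (μ + t • (Pi.single γ₁ 1 - Pi.single γ₀ 1)) := by
  obtain ⟨hnonneg, hsupp, hsum⟩ := hμ
  refine ⟨fun γ => ?_, fun γ hγ => ?_, ?_⟩
  · simp only [Pi.add_apply, Pi.smul_apply, Pi.sub_apply, Pi.single_apply, smul_eq_mul]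
    have := hnonneg γ
    split_ifs with hγ₁ hγ₀ <;> subst_vars <;> nlinarith
  · have hγ₀ : γ ≠ γ₀ := by rintro rfl; exact hγ h₀
    have hγ₁ : γ ≠ γ₁ := by rintro rfl; exact hγ h₁
    simp [hsupp γ hγ, hγ₀, hγ₁]
  · simp [sum_add_distrib, ← mul_sum, hsum, h₀, h₁]

lemma sum_eta_le_of_EO_eq_MEO [Fintype V] (hμ : IsPmf Γ μ) (hopt : EO Γ μ = MEO Γ)
    {γ₀ γ₁ : Finset (Sym2 V)} (h₀ : γ₀ ∈ Γ) (hpos : 0 < μ γ₀) (h₁ : γ₁ ∈ Γ) :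
    ∑ e ∈ γ₀, eta Γ μ e ≤ ∑ e ∈ γ₁, eta Γ μ e := by
  by_contra! hlt
  set δ : Finset (Sym2 V) → ℝ := Pi.single γ₁ 1 - Pi.single γ₀ 1
  have hdir : ∑ e, eta Γ μ e * eta Γ δ e < 0 := by
    rw [sum_eta_mul_eta]
    simp [δ, sub_mul, sum_sub_distrib, Pi.single_apply, ite_mul, h₀, h₁, hlt]
  obtain ⟨t, ht, htμ, hdecr⟩ := exists_sum_sq_add_mul_lt _ _ _ hdir hpos
  have hν := hμ.add_smul_single_sub_single h₀ h₁ ht.le htμ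
  have : EO Γ (μ + t • δ) < EO Γ μ := by
    simpa only [EO_eq_sum_eta_sq, eta_add_smul] using hdecr
  linarith [MEO_le_EO hν]

end Optimality

section SpanningTrees

open SimpleGraph

variable {V : Type*} [Fintype V] [DecidableEq V] {G : SimpleGraph V} {γ : Finset (Sym2 V)}

lemma mem_spanningTrees :
    γ ∈ spanningTrees G ↔ ↑γ ⊆ G.edgeSet ∧ (fromEdgeSet (γ : Set (Sym2 V))).Connected ∧
      #γ = Fintype.card V - 1 := by
  simp [spanningTrees]

lemma isTree_fromEdgeSet_of_mem_spanningTrees (h : γ ∈ spanningTrees G) :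
    (fromEdgeSet (γ : Set (Sym2 V))).IsTree := by
  obtain ⟨hsub, hconn, hcard⟩ := mem_spanningTrees.1 h
  have hedges : (fromEdgeSet (γ : Set (Sym2 V))).edgeSet = γ := by
    rw [edgeSet_fromEdgeSet, sdiff_eq_left]
    exact Set.disjoint_left.2 fun e he => G.not_isDiag_of_mem_edgeSet (hsub he)
  have : 0 < Fintype.card V := Fintype.card_pos_iff.2 hconn.nonempty
  rw [isTree_iff_connected_and_card, hedges, Nat.card_coe_set_eq, Set.ncard_coe_finset,
    Nat.card_eq_fintype_card]
  exact ⟨hconn, by omega⟩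

lemma spanningTrees_nonempty (hG : G.Connected) : (spanningTrees G).Nonempty := by
  obtain ⟨T, hle, hT⟩ := hG.exists_isTree_le
  refine ⟨T.edgeFinset, mem_spanningTrees.2 ⟨?_, ?_, ?_⟩⟩
  · rw [coe_edgeFinset]
    exact edgeSet_mono hle
  · rw [coe_edgeFinset, fromEdgeSet_edgeSet]
    exact hT.connected
  · have := hT.card_edgeFinset
    omega

lemma uniformPmf_of_mem (h : γ ∈ spanningTrees G) :
    uniformPmf G γ = (#(spanningTrees G) : ℝ)⁻¹ :=
  if_pos h

lemma uniformPmf_pos (h : γ ∈ spanningTrees G) : 0 < uniformPmf G γ := by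
  have : 0 < #(spanningTrees G) := card_pos.2 ⟨γ, h⟩
  rw [uniformPmf_of_mem h]
  positivity

lemma isPmf_uniformPmf (hne : (spanningTrees G).Nonempty) :
    IsPmf (spanningTrees G) (uniformPmf G) := by
  refine ⟨fun γ => ?_, fun γ h => if_neg h, ?_⟩
  · by_cases h : γ ∈ spanningTrees G
    · exact (uniformPmf_pos h).le
    · simp [uniformPmf, h]
  · rw [sum_congr rfl fun γ => uniformPmf_of_mem, sum_const, nsmul_eq_mul]
    exact mul_inv_cancel₀ (Nat.cast_ne_zero.2 (card_pos.2 hne).ne')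

lemma sum_eta_uniformPmf_eq
    (hopt : EO (spanningTrees G) (uniformPmf G) = MEO (spanningTrees G))
    {γ₀ γ₁ : Finset (Sym2 V)} (h₀ : γ₀ ∈ spanningTrees G) (h₁ : γ₁ ∈ spanningTrees G) :
    ∑ e ∈ γ₀, eta (spanningTrees G) (uniformPmf G) e =
      ∑ e ∈ γ₁, eta (spanningTrees G) (uniformPmf G) e :=
  have hμ := isPmf_uniformPmf ⟨γ₀, h₀⟩
  le_antisymm (sum_eta_le_of_EO_eq_MEO hμ hopt h₀ (uniformPmf_pos h₀) h₁)
    (sum_eta_le_of_EO_eq_MEO hμ hopt h₁ (uniformPmf_pos h₁) h₀)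

end SpanningTrees

namespace SimpleGraph

variable {V : Type*} {G T : SimpleGraph V}

lemma Walk.snd_concat {u v w : V} {p : G.Walk u v} (hp : ¬p.Nil) (h : G.Adj v w) :
    (p.concat h).snd = p.snd := by
  cases p with
  | nil => exact absurd Walk.Nil.nil hp
  | cons _ _ => rw [Walk.concat_cons, Walk.snd_cons, Walk.snd_cons]

lemma Walk.mem_of_mem_edges_fromEdgeSet {s : Set (Sym2 V)} {u v : V}
    {p : (fromEdgeSet s).Walk u v} {e : Sym2 V} (he : e ∈ p.edges) : e ∈ s :=
  (edgeSet_fromEdgeSet s ▸ p.edges_subset_edgeSet he).1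

lemma Connected.eq_on_edgeSet {β : Type*} {w : Sym2 V → β} (hG : G.Connected)
    (hw : ∀ ⦃v a b : V⦄, G.Adj v a → G.Adj v b → w s(v, a) = w s(v, b))
    {e e' : Sym2 V} (he : e ∈ G.edgeSet) (he' : e' ∈ G.edgeSet) : w e = w e' := by
  have hwalk : ∀ {x y : V} (p : G.Walk x y) {x' : V}, G.Adj x x' →
      ∀ f ∈ p.edges, w f = w s(x, x') := by
    intro x y p
    induction p with
    | nil => simp
    | cons hxc q ih =>
      intro x' hx f hf
      rcases List.mem_cons.1 (Walk.edges_cons _ _ ▸ hf) with rfl | hf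
      · exact hw hxc hx
      · rw [ih hxc.symm f hf, Sym2.eq_swap]
        exact hw hxc hx
  induction e using Sym2.ind with
  | _ a b =>
  induction e' using Sym2.ind with
  | _ a' b' =>
  have hab : G.Adj a b := he
  have hab' : G.Adj a' b' := he'
  exact (hwalk ((hG.preconnected a a').some.concat hab') hab _ (by simp [Walk.edges_concat])).symm

def IsTree.path (hT : T.IsTree) (u v : V) : T.Walk u v :=
  (hT.existsUnique_path u v).exists.choose

lemma IsTree.isPath_path (hT : T.IsTree) (u v : V) : (hT.path u v).IsPath :=
  (hT.existsUnique_path u v).exists.choose_spec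

lemma IsTree.path_eq (hT : T.IsTree) {u v : V} {p : T.Walk u v} (hp : p.IsPath) :
    hT.path u v = p :=
  (hT.existsUnique_path u v).unique (hT.isPath_path u v) hp

lemma IsTree.snd_path_eq_of_adj (hT : T.IsTree) {v u u' : V} (hu : u ≠ v) (hu' : u' ≠ v)
    (h : T.Adj u u') : (hT.path v u).snd = (hT.path v u').snd := by
  have hconcat : ∀ {a b : V}, a ≠ v → (hab : T.Adj a b) → a ∈ (hT.path v b).support →
      (hT.path v a).snd = (hT.path v b).snd := fun ha hab hmem => by
    rw [hT.isAcyclic.path_concat (hT.isPath_path v _) (hT.isPath_path v _) hab hmem,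
      Walk.snd_concat (Walk.not_nil_of_ne ha.symm)]
  by_cases hmem : u ∈ (hT.path v u').support
  · exact hconcat hu h hmem
  · exact (hconcat hu' h.symm (hT.isAcyclic.mem_support_of_ne_mem_support_of_adj_of_isPath
      (hT.isPath_path v u) (hT.isPath_path v u') h hmem)).symm

lemma IsTree.snd_path_eq_of_walk (hT : T.IsTree) {v a b : V} (q : T.Walk a b)
    (hv : v ∉ q.support) : (hT.path v a).snd = (hT.path v b).snd := by
  induction q with
  | nil => rfl
  | cons h q ih =>
    rw [Walk.support_cons, List.mem_cons, not_or] at hv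
    have hc : _ ≠ v := fun hc => hv.2 (hc ▸ q.start_mem_support)
    exact (hT.snd_path_eq_of_adj (Ne.symm hv.1) hc h).trans (ih hv.2)

/-- The fundamental cycle of an edge `s(x, y)` of `G` consists of that edge and the path of `T`
from `x` to `y`. -/
def IsConstOnFundamentalCycles {β : Type*} (G : SimpleGraph V) (hT : T.IsTree)
    (w : Sym2 V → β) : Prop :=
  ∀ ⦃x y : V⦄, G.Adj x y → ∀ f ∈ (hT.path x y).edges, w s(x, y) = w f

variable {β : Type*} {hT : T.IsTree} {w : Sym2 V → β}

lemma IsConstOnFundamentalCycles.apply_snd_path_eq (hw : IsConstOnFundamentalCycles G hT w)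
    {v u u' : V} (hu : u ≠ v) (hu' : u' ≠ v) (h : G.Adj u u') :
    w s(v, (hT.path v u).snd) = w s(v, (hT.path v u').snd) := by
  set r := hT.path u u'
  by_cases hv : v ∈ r.support
  · -- `v` splits the path from `u` to `u'` into the paths from `v` to `u` and to `u'`
    have hr := hT.isPath_path u u'
    have h₁ : s(v, (hT.path v u).snd) ∈ r.edges := by
      rw [hT.path_eq (hr.takeUntil hv).reverse]
      have := Walk.mk_start_snd_mem_edges (p := (r.takeUntil v hv).reverse)
        (Walk.not_nil_of_ne hu.symm)
      rw [Walk.edges_reverse, List.mem_reverse] at this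
      exact r.edges_takeUntil_subset_edges hv this
    have h₂ : s(v, (hT.path v u').snd) ∈ r.edges := by
      rw [hT.path_eq (hr.dropUntil hv)]
      exact r.edges_dropUntil_subset_edges hv
        (Walk.mk_start_snd_mem_edges (Walk.not_nil_of_ne hu'.symm))
    rw [← hw h _ h₁, ← hw h _ h₂]
  · rw [hT.snd_path_eq_of_walk r hv]

lemma IsConstOnFundamentalCycles.apply_adj_eq (hw : IsConstOnFundamentalCycles G hT w)
    {v a b : V} (hv : (G.induce {v}ᶜ).Connected) (ha : T.Adj v a) (hb : T.Adj v b) :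
    w s(v, a) = w s(v, b) := by
  have hsnd : ∀ {c : V}, T.Adj v c → (hT.path v c).snd = c := fun hc => by
    rw [hT.path_eq (Walk.IsPath.of_adj hc)]
    simp
  have hwalk : ∀ {A B : ({v}ᶜ : Set V)}, (G.induce {v}ᶜ).Walk A B →
      w s(v, (hT.path v A).snd) = w s(v, (hT.path v B).snd) := by
    intro A B p
    induction p with
    | nil => rfl
    | @cons A C _ h _ ih => exact (hw.apply_snd_path_eq A.2 C.2 h).trans ih
  have hp := hwalk (hv.preconnected ⟨a, ha.ne'⟩ ⟨b, hb.ne'⟩).some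
  rwa [hsnd ha, hsnd hb] at hp

theorem IsConstOnFundamentalCycles.eq_on_edgeSet (hw : IsConstOnFundamentalCycles G hT w)
    (hbi : ∀ v, (G.induce {v}ᶜ).Connected) {e e' : Sym2 V} (he : e ∈ G.edgeSet)
    (he' : e' ∈ G.edgeSet) : w e = w e' := by
  have hreduce : ∀ e ∈ G.edgeSet, ∃ f ∈ T.edgeSet, w e = w f := by
    intro e he
    induction e using Sym2.ind with
    | _ x y =>
    have hfirst := Walk.mk_start_snd_mem_edges (p := hT.path x y)
      (Walk.not_nil_of_ne (G.ne_of_adj he))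
    exact ⟨_, (hT.path x y).edges_subset_edgeSet hfirst, hw he _ hfirst⟩
  obtain ⟨f, hf, hef⟩ := hreduce e he
  obtain ⟨f', hf', hef'⟩ := hreduce e' he'
  rw [hef, hef']
  exact hT.connected.eq_on_edgeSet (fun v _ _ ha hb => hw.apply_adj_eq (hbi v) ha hb) hf hf'

end SimpleGraph

section Exchange

open SimpleGraph

variable {V : Type*} [Fintype V] [DecidableEq V] {G : SimpleGraph V} {γ : Finset (Sym2 V)}

lemma insert_erase_mem_spanningTrees (hγ : γ ∈ spanningTrees G)
    (hT : (fromEdgeSet (γ : Set (Sym2 V))).IsTree) {x y : V} (hxy : G.Adj x y)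
    (hxyγ : s(x, y) ∉ γ) {f : Sym2 V} (hf : f ∈ (hT.path x y).edges) :
    insert s(x, y) (γ.erase f) ∈ spanningTrees G := by
  obtain ⟨hsub, hconn, hcard⟩ := mem_spanningTrees.1 hγ
  have hfγ : f ∈ γ := Walk.mem_of_mem_edges_fromEdgeSet hf
  have hfxy : s(x, y) ≠ f := fun h => hxyγ (h ▸ hfγ)
  set H := fromEdgeSet (↑(insert s(x, y) γ) : Set (Sym2 V))
  have hTH : fromEdgeSet (γ : Set (Sym2 V)) ≤ H :=
    fromEdgeSet_mono (by simp [Set.subset_insert])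
  have hyx : H.Adj y x := by simp [H, hxy.ne', Sym2.eq_swap]
  have hcycle : (Walk.cons hyx ((hT.path x y).mapLe hTH)).IsCycle := by
    refine (Walk.cons_isCycle_iff _ _).2 ⟨(hT.isPath_path x y).mapLe hTH, fun h => hxyγ ?_⟩
    rw [Walk.edges_mapLe_eq_edges] at h
    exact Sym2.eq_swap ▸ Walk.mem_of_mem_edges_fromEdgeSet h
  have hbridge : ¬ H.IsBridge f := fun hb =>
    hb.notMem_edges_of_isCycle hcycle (by simp [hf])
  induction f using Sym2.ind with
  | _ a b =>
  have hHconn := (hconn.mono hTH).connected_delete_edge_of_not_isBridge hbridge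
  refine mem_spanningTrees.2 ⟨?_, ?_, ?_⟩
  · rw [coe_insert, Set.insert_subset_iff]
    exact ⟨hxy, (coe_subset.2 (erase_subset _ _)).trans hsub⟩
  · rwa [← erase_insert_of_ne hfxy, coe_erase, ← deleteEdges_fromEdgeSet]
  · have : 0 < #γ := card_pos.2 ⟨_, hfγ⟩
    rw [card_insert_of_notMem fun h => hxyγ (mem_of_mem_erase h), card_erase_of_mem hfγ]
    omega

lemma isConstOnFundamentalCycles_of_sum_eq (hγ : γ ∈ spanningTrees G)
    (hT : (fromEdgeSet (γ : Set (Sym2 V))).IsTree) {w : Sym2 V → ℝ}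
    (hw : ∀ γ' ∈ spanningTrees G, ∑ e ∈ γ', w e = ∑ e ∈ γ, w e) :
    IsConstOnFundamentalCycles G hT w := by
  intro x y hxy f hf
  by_cases hxyγ : s(x, y) ∈ γ
  · rw [hT.path_eq (Walk.IsPath.of_adj ((fromEdgeSet_adj _).2 ⟨hxyγ, hxy.ne⟩))] at hf
    simp_all
  · have hfγ : f ∈ γ := Walk.mem_of_mem_edges_fromEdgeSet hf
    have := hw _ (insert_erase_mem_spanningTrees hγ hT hxy hxyγ hf)
    rw [sum_insert fun h => hxyγ (mem_of_mem_erase h), ← add_sum_erase γ w hfγ] at this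
    linarith

end Exchange

theorem biconnected_uniform_is_homogeneous_general
    {V : Type*} [Fintype V] [DecidableEq V]
    (G : SimpleGraph V) (hG : G.Connected) (hE : G.edgeFinset.Nonempty)
    (hbi : ∀ v : V, (G.induce ({v}ᶜ : Set V)).Connected)
    (huniform : EO (spanningTrees G) (uniformPmf G) = MEO (spanningTrees G)) :
    IsHomogeneous G ∧
    ∀ e ∈ G.edgeFinset, ∀ e' ∈ G.edgeFinset,
      eta (spanningTrees G) (uniformPmf G) e = eta (spanningTrees G) (uniformPmf G) e' := by
  obtain ⟨γ, hγ⟩ := spanningTrees_nonempty hG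
  have hT := isTree_fromEdgeSet_of_mem_spanningTrees hγ
  have hcycles := isConstOnFundamentalCycles_of_sum_eq hγ hT
    fun γ' hγ' => sum_eta_uniformPmf_eq huniform hγ' hγ
  have hconst : ∀ e ∈ G.edgeFinset, ∀ e' ∈ G.edgeFinset,
      eta (spanningTrees G) (uniformPmf G) e = eta (spanningTrees G) (uniformPmf G) e' :=
    fun e he e' he' => hcycles.eq_on_edgeSet hbi (SimpleGraph.mem_edgeFinset.1 he)
      (SimpleGraph.mem_edgeFinset.1 he')
  obtain ⟨e₀, he₀⟩ := hE
  exact ⟨⟨uniformPmf G, isPmf_uniformPmf ⟨γ, hγ⟩, _, fun e he => hconst e he e₀ he₀⟩, hconst⟩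

/-- a biconnected uniform graph is homogeneous. -/
theorem biconnected_uniform_is_homogeneous
    {V : Type*} [Fintype V] [DecidableEq V]
    (G : SimpleGraph V) (hG : G.Connected) (hE : G.edgeFinset.Nonempty)
    (hV : 3 ≤ Fintype.card V)
    (hbi : ∀ v : V, (G.induce ({v}ᶜ : Set V)).Connected)
    (huniform : EO (spanningTrees G) (uniformPmf G) = MEO (spanningTrees G)) :
    IsHomogeneous G ∧
    ∀ e ∈ G.edgeFinset, ∀ e' ∈ G.edgeFinset,
      eta (spanningTrees G) (uniformPmf G) e = eta (spanningTrees G) (uniformPmf G) e' :=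
  biconnected_uniform_is_homogeneous_general G hG hE hbi huniform
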